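/- arXiv:2211.11290 — 5 statements merged into one kernel-verified Lean document; each statement's English description precedes it below -/
import Mathlib

section
/- The Diffie–Hellman trajectory satisfies the exact integer linear recurrence x_{k+q̃+1} = x_k − x_{k+1} + x_{k+q̃} for every k ∈ ℕ, where q̃ = (p−1)/2. (This is the sufficiency part of the paper's Theorem 4: the companion matrix with coefficient vector α = (1, −1, 0, …, 0, 1) gives an exact (q̃+1)-dimensional linear representation of the Diffie–Hellman cryptosystem.) -/
/-- sufficiency part of Theorem 4: The Diffie–Hellman trajectory
`x k = m ^ k mod p` (representative in `{1, …, p-1}`) satisfies the exact integer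
linear recurrence `x (k + q̃ + 1) = x k - x (k+1) + x (k + q̃)` for every `k ∈ ℕ`,
where `q̃ = (p-1)/2`. -/
theorem dh_trajectory_linear_recurrence
    (p : ℕ) (hp : p.Prime) (hodd : Odd p) (hp3 : 3 < p)
    (m : ℤ) (hm1 : 1 < m) (hmp : m < (p : ℤ))
    (hgen : ∀ c : ZMod p, c ≠ 0 → ∃ k : ℕ, (m : ZMod p) ^ k = c)
    (x : ℕ → ℤ) (hx : ∀ k, x k = m ^ k % (p : ℤ)) :
    ∀ k : ℕ, x (k + (p - 1) / 2 + 1) = x k - x (k + 1) + x (k + (p - 1) / 2) := by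
  haveI := Fact.mk hp
  set q := (p - 1) / 2 with hqdef
  set u : ZMod p := (m : ZMod p) with hu
  have hq2 : 2 * q = p - 1 := by
    obtain ⟨t, ht⟩ := hodd; omega
  have hqpos : 0 < q := by omega
  -- u ≠ 0
  have hu0 : u ≠ 0 := by
    intro h
    have h2 : ((2:ℕ) : ZMod p) ≠ 0 := by
      rw [Ne, ZMod.natCast_eq_zero_iff]
      intro hd; have := Nat.le_of_dvd (by norm_num) hd; omega
    obtain ⟨k, hk⟩ := hgen 2 (by exact_mod_cast h2)
    rw [h] at hk
    rcases Nat.eq_zero_or_pos k with hk0 | hk1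
    · subst hk0
      simp only [pow_zero] at hk
      have h12 : ((1:ℕ) : ZMod p) = ((2:ℕ) : ZMod p) := by push_cast; exact hk
      rw [ZMod.natCast_eq_natCast_iff'] at h12
      rw [Nat.mod_eq_of_lt (by omega), Nat.mod_eq_of_lt (by omega)] at h12
      omega
    · rw [zero_pow (by omega)] at hk
      exact h2 (by exact_mod_cast hk.symm)
  have huq : u ^ q = -1 := by
    have hsq : u ^ q * u ^ q = 1 := by
      rw [← pow_add]
      have hqq : q + q = p - 1 := by omega
      rw [hqq]
      exact ZMod.pow_card_sub_one_eq_one hu0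
    rcases mul_self_eq_one_iff.mp hsq with h1 | h1
    · exfalso
      -- pigeonhole: powers of u would form a set of size ≤ q < p - 1
      set S := (Finset.range q).image (fun i => u ^ i) with hS
      have hsub : (Finset.univ.erase (0 : ZMod p)) ⊆ S := by
        intro c hc
        obtain ⟨k, hk⟩ := hgen c (Finset.ne_of_mem_erase hc)
        have hkk : u ^ k = u ^ (k % q) := by
          conv_lhs => rw [← Nat.div_add_mod k q]
          rw [pow_add, pow_mul, h1, one_pow, one_mul]
        exact Finset.mem_image.mpr ⟨k % q, Finset.mem_range.mpr (Nat.mod_lt _ hqpos),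
          by rw [← hkk, hk]⟩
      have hcard1 : (Finset.univ.erase (0 : ZMod p)).card = p - 1 := by
        rw [Finset.card_erase_of_mem (Finset.mem_univ _), Finset.card_univ, ZMod.card]
      have hle := Finset.card_le_card hsub
      have hle2 : S.card ≤ q := by
        rw [hS]
        exact Finset.card_image_le.trans (by rw [Finset.card_range])
      rw [hcard1] at hle
      omega
    · exact h1
  -- key: x (n + q) = p - x n
  have key : ∀ n, x (n + q) = (p : ℤ) - x n := by
    intro n
    have hdvd : (p : ℤ) ∣ m ^ (n + q) + m ^ n := by
      rw [← ZMod.intCast_zmod_eq_zero_iff_dvd]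
      push_cast
      rw [pow_add, ← hu, huq]
      ring
    have hnd : ¬ (p : ℤ) ∣ m ^ n := by
      rw [← ZMod.intCast_zmod_eq_zero_iff_dvd]
      push_cast
      rw [← hu]
      exact pow_ne_zero _ hu0
    have hnd2 : ¬ (p : ℤ) ∣ m ^ (n + q) := by
      rw [← ZMod.intCast_zmod_eq_zero_iff_dvd]
      push_cast
      rw [← hu]
      exact pow_ne_zero _ hu0
    have hppos : (0 : ℤ) < p := by exact_mod_cast hp.pos
    have ha1 : 0 ≤ m ^ n % p := Int.emod_nonneg _ (by omega)
    have ha2 : m ^ n % p < p := Int.emod_lt_of_pos _ hppos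
    have ha0 : m ^ n % p ≠ 0 := fun h => hnd (Int.dvd_of_emod_eq_zero h)
    have hb1 : 0 ≤ m ^ (n + q) % p := Int.emod_nonneg _ (by omega)
    have hb2 : m ^ (n + q) % p < p := Int.emod_lt_of_pos _ hppos
    have hb0 : m ^ (n + q) % p ≠ 0 := fun h => hnd2 (Int.dvd_of_emod_eq_zero h)
    have hsum : (m ^ (n + q) % p + m ^ n % p) % p = 0 := by
      rw [← Int.add_emod]
      exact Int.emod_eq_zero_of_dvd hdvd
    obtain ⟨c, hc⟩ := Int.dvd_of_emod_eq_zero hsum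
    have hapos : 0 < m ^ n % p := lt_of_le_of_ne ha1 (Ne.symm ha0)
    have hbpos : 0 < m ^ (n + q) % p := lt_of_le_of_ne hb1 (Ne.symm hb0)
    have hc1 : 1 ≤ c := by
      by_contra h
      push_neg at h
      have hle0 : (p:ℤ) * c ≤ 0 := mul_nonpos_of_nonneg_of_nonpos hppos.le (by omega)
      linarith
    have hc2 : c < 2 := by
      by_contra h
      push_neg at h
      have h2p : (p:ℤ) * 2 ≤ p * c := mul_le_mul_of_nonneg_left h hppos.le
      linarith
    have hc3 : c = 1 := by omega
    rw [hc3, mul_one] at hc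
    rw [hx, hx]
    linarith
  intro k
  have h1 := key (k + 1)
  have h2 := key k
  rw [show k + q + 1 = (k + 1) + q by omega, h1, h2]
  ring
end

section
/- (Corollary 5) For every natural number q with q ≥ q̃ = (p−1)/2 and every k ∈ ℕ, the Diffie–Hellman trajectory satisfies x_{k+q+1} = x_{k+q−q̃} − x_{k+q−q̃+1} + x_{k+q}; i.e., the (q+1)-dimensional companion matrix with coefficients α_{q−q̃} = 1, α_{q−q̃+1} = −1, α_q = 1 and all other α_j = 0 gives an exact linear representation of the cryptosystem. -/
/-- Corollary 5: For every `q ≥ q̃ = (p-1)/2` and every `k ∈ ℕ`, the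
Diffie–Hellman trajectory satisfies
`x (k+q+1) = x (k+q-q̃) - x (k+q-q̃+1) + x (k+q)`; i.e., the `(q+1)`-dimensional
companion matrix with `α_{q-q̃} = 1`, `α_{q-q̃+1} = -1`, `α_q = 1` and all other
`α_j = 0` gives an exact linear representation of the cryptosystem. -/
theorem dh_linear_recurrence_general_q
    (p : ℕ) (hp : p.Prime) (hodd : Odd p) (hp3 : 3 < p)
    (m : ℤ) (hm1 : 1 < m) (hmp : m < (p : ℤ))
    (hgen : ∀ c : ZMod p, c ≠ 0 → ∃ k : ℕ, (m : ZMod p) ^ k = c)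
    (x : ℕ → ℤ) (hx : ∀ k, x k = m ^ k % (p : ℤ)) :
    ∀ q : ℕ, (p - 1) / 2 ≤ q → ∀ k : ℕ,
      x (k + q + 1)
        = x (k + q - (p - 1) / 2) - x (k + q - (p - 1) / 2 + 1) + x (k + q) := by
  intro q hq k
  haveI : Fact p.Prime := ⟨hp⟩
  set t : ℕ := (p - 1) / 2 with ht
  obtain ⟨r, hr⟩ := hodd
  have hp0 : (0:ℤ) < (p:ℤ) := by exact_mod_cast hp.pos
  have hpm : ¬ (p:ℤ) ∣ m := by
    intro h
    have := Int.le_of_dvd (by linarith) h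
    linarith
  have hmz : (m : ZMod p) ≠ 0 := by
    rw [Ne, ZMod.intCast_zmod_eq_zero_iff_dvd]
    exact hpm
  -- m^t = -1 in ZMod p
  have hsq : ((m : ZMod p) ^ t) * ((m:ZMod p)^t) = 1 := by
    rw [← pow_add]
    have htt : t + t = p - 1 := by omega
    rw [htt]
    exact ZMod.pow_card_sub_one_eq_one hmz
  have hneg : (m : ZMod p) ^ t = -1 := by
    rcases mul_self_eq_one_iff.mp hsq with h1 | h1
    · exfalso
      have hsub : (Finset.univ.erase (0 : ZMod p)) ⊆
          (Finset.range t).image (fun j => (m:ZMod p)^j) := by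
        intro c hc
        obtain ⟨j, hj⟩ := hgen c (Finset.ne_of_mem_erase hc)
        have ht0 : 0 < t := by omega
        refine Finset.mem_image.mpr ⟨j % t, Finset.mem_range.mpr (Nat.mod_lt _ ht0), ?_⟩
        have : (m:ZMod p)^j = (m:ZMod p)^(j % t) := by
          conv_lhs => rw [← Nat.div_add_mod j t]
          rw [pow_add, pow_mul, h1, one_pow, one_mul]
        rw [← this, hj]
      have h2 := Finset.card_le_card hsub
      have h3 : (Finset.univ.erase (0 : ZMod p)).card = p - 1 := by
        rw [Finset.card_erase_of_mem (Finset.mem_univ 0), Finset.card_univ, ZMod.card]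
      have h4 : ((Finset.range t).image (fun j => (m:ZMod p)^j)).card ≤ t :=
        le_trans (Finset.card_image_le) (by simp)
      omega
    · exact h1
  have hdvd : (p:ℤ) ∣ m ^ t + 1 := by
    have : ((m ^ t + 1 : ℤ) : ZMod p) = 0 := by
      push_cast
      rw [hneg]; ring
    exact (ZMod.intCast_zmod_eq_zero_iff_dvd _ p).mp this
  have hprime : Prime ((p:ℤ)) := (Int.prime_iff_natAbs_prime.mpr (by simpa using hp))
  have key : ∀ n : ℕ, m ^ (n + t) % (p:ℤ) = (p:ℤ) - m ^ n % (p:ℤ) := by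
    intro n
    have h1 : ¬ (p:ℤ) ∣ m ^ n := fun h => hpm (hprime.dvd_of_dvd_pow h)
    have ha0 : 0 ≤ m^n % (p:ℤ) := Int.emod_nonneg _ (ne_of_gt hp0)
    have ha1 : m^n % (p:ℤ) < p := Int.emod_lt_of_pos _ hp0
    have ha2 : m^n % (p:ℤ) ≠ 0 := fun h => h1 (Int.dvd_of_emod_eq_zero h)
    have e1 : (p:ℤ) ∣ m^n - m^n % (p:ℤ) := Int.dvd_self_sub_of_emod_eq rfl
    have hd : (p:ℤ) ∣ m^(n+t) - ((p:ℤ) - m^n % (p:ℤ)) := by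
      have : m^(n+t) - ((p:ℤ) - m^n % (p:ℤ))
          = m^n * (m^t + 1) - (p:ℤ) - (m^n - m^n % (p:ℤ)) := by
        rw [pow_add]; ring
      rw [this]
      exact dvd_sub (dvd_sub (Dvd.dvd.mul_left hdvd _) dvd_rfl) e1
    calc m ^ (n + t) % (p:ℤ) = ((p:ℤ) - m ^ n % (p:ℤ)) % (p:ℤ) :=
          (Int.modEq_iff_dvd.mpr hd).symm
      _ = (p:ℤ) - m ^ n % (p:ℤ) := Int.emod_eq_of_lt (by omega) (by omega)
  set n : ℕ := k + q - t with hn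
  have h2 : k + q = n + t := by omega
  have h3 : k + q + 1 = (n + 1) + t := by omega
  rw [hx, hx, hx, hx, h3, h2, key (n + 1), key n]
  ring
end

section
/- For every k ∈ ℕ, the Diffie–Hellman trajectory satisfies x_{k+q̃−1} − x_{k+q̃} + x_{k+p−2} = x_k, where q̃ = (p−1)/2; in particular the (p−1)-dimensional cyclic-shift representation with α = (1, 0, …, 0) is consistent with the recurrence of Corollary 5. -/
/-- For every `k ∈ ℕ`, the Diffie–Hellman trajectory satisfies
`x (k + q̃ - 1) - x (k + q̃) + x (k + p - 2) = x k`, where `q̃ = (p-1)/2`; in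
particular the `(p-1)`-dimensional cyclic-shift representation with
`α = (1, 0, …, 0)` is consistent with the recurrence of Corollary 5. -/
theorem dh_cyclic_shift_consistency
    (p : ℕ) (hp : p.Prime) (hodd : Odd p) (hp3 : 3 < p)
    (m : ℤ) (hm1 : 1 < m) (hmp : m < (p : ℤ))
    (hgen : ∀ c : ZMod p, c ≠ 0 → ∃ k : ℕ, (m : ZMod p) ^ k = c)
    (x : ℕ → ℤ) (hx : ∀ k, x k = m ^ k % (p : ℤ)) :
    ∀ k : ℕ, x (k + (p - 1) / 2 - 1) - x (k + (p - 1) / 2) + x (k + p - 2) = x k := by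
  haveI : Fact p.Prime := ⟨hp⟩
  obtain ⟨t, ht⟩ := hodd
  have ht2 : 2 ≤ t := by omega
  have hq : (p - 1) / 2 = t := by omega
  have hp0 : (0 : ℤ) < p := by exact_mod_cast hp.pos
  -- m is not divisible by p
  have hndvd : ¬ (p : ℤ) ∣ m := by
    intro h
    have := Int.le_of_dvd (by linarith) h
    linarith
  have hm0 : (m : ZMod p) ≠ 0 := by
    rw [Ne, ZMod.intCast_zmod_eq_zero_iff_dvd]
    exact hndvd
  -- the unit corresponding to m
  set u : (ZMod p)ˣ := (isUnit_iff_ne_zero.mpr hm0).unit with hu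
  have huval : (u : ZMod p) = (m : ZMod p) := rfl
  have hzp : ∀ v : (ZMod p)ˣ, v ∈ Subgroup.zpowers u := by
    intro v
    obtain ⟨k, hk⟩ := hgen (v : ZMod p) (Units.ne_zero v)
    refine ⟨(k : ℤ), ?_⟩
    show u ^ (k : ℤ) = v
    rw [zpow_natCast]
    apply Units.ext
    simpa [huval] using hk
  have horder : orderOf u = p - 1 := by
    rw [orderOf_eq_card_of_forall_mem_zpowers hzp, Nat.card_eq_fintype_card, ZMod.card_units]
  -- m^t = -1 in ZMod p
  have hut : u ^ t ≠ 1 := by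
    apply pow_ne_one_of_lt_orderOf (by omega)
    omega
  have husq : (u ^ t) * (u ^ t) = 1 := by
    have : u ^ (p - 1) = 1 := by
      rw [← horder]; exact pow_orderOf_eq_one u
    calc (u ^ t) * (u ^ t) = u ^ (t + t) := by rw [pow_add]
    _ = 1 := by rw [show t + t = p - 1 by omega, this]
  have hmt : (m : ZMod p) ^ t = -1 := by
    have h1 : ((m : ZMod p) ^ t) * ((m : ZMod p) ^ t) = 1 := by
      have := congrArg (Units.val) husq
      simpa [huval] using this
    rcases mul_self_eq_one_iff.mp h1 with h | h
    · exact absurd (Units.ext (by simpa [huval] using h)) hut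
    · exact h
  -- key divisibility
  have hkey : (p : ℤ) ∣ m ^ t + 1 := by
    have : ((m ^ t + 1 : ℤ) : ZMod p) = 0 := by
      push_cast
      rw [hmt]; ring
    exact (ZMod.intCast_zmod_eq_zero_iff_dvd _ _).mp this
  -- bounds on x
  have hxlb : ∀ j, 0 < x j := by
    intro j
    rw [hx]
    rcases lt_or_eq_of_le (Int.emod_nonneg (m ^ j) (show (p:ℤ) ≠ 0 by positivity)) with h | h
    · exact h
    · exfalso
      have : (p : ℤ) ∣ m ^ j := Int.dvd_of_emod_eq_zero h.symm
      have := (Int.Prime.dvd_pow' (by exact_mod_cast hp) this)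
      exact hndvd this
  have hxub : ∀ j, x j < p := by
    intro j; rw [hx]; exact Int.emod_lt_of_pos _ hp0
  -- pairing lemma
  have pair : ∀ a b : ℕ, b = a + t → x a + x b = p := by
    intro a b hab
    have hdvd : (p : ℤ) ∣ x a + x b := by
      rw [hx, hx, hab, pow_add]
      have h1 : m ^ a % p ≡ m ^ a [ZMOD p] := Int.emod_emod_of_dvd _ dvd_rfl
      have h2 : m ^ a * m ^ t % p ≡ m ^ a * m ^ t [ZMOD p] :=
        Int.emod_emod_of_dvd _ dvd_rfl
      have h3 : (p : ℤ) ∣ m ^ a + m ^ a * m ^ t := by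
        have : m ^ a + m ^ a * m ^ t = m ^ a * (m ^ t + 1) := by ring
        rw [this]; exact Dvd.dvd.mul_left hkey _
      have h4 : m ^ a % p + m ^ a * m ^ t % p ≡ 0 [ZMOD p] :=
        (h1.add h2).trans ((Int.modEq_zero_iff_dvd).mpr h3)
      exact (Int.modEq_zero_iff_dvd).mp h4
    have ha1 := hxlb a
    have ha2 := hxub a
    have hb1 := hxlb b
    have hb2 := hxub b
    obtain ⟨c, hc⟩ := hdvd
    have hc1 : 0 < c := by nlinarith
    have hc2 : c < 2 := by nlinarith
    have : c = 1 := by omega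
    rw [this] at hc
    linarith
  intro k
  have e1 : k + (p - 1) / 2 - 1 = k + (t - 1) := by omega
  have e2 : k + (p - 1) / 2 = k + t := by omega
  have e3 : k + p - 2 = (k + (t - 1)) + t := by omega
  rw [e1, e2, e3]
  have p1 := pair (k + (t - 1)) ((k + (t - 1)) + t) rfl
  have p2 := pair k (k + t) rfl
  linarith
end

section
/- Let q ≥ q̃ = (p−1)/2 and let α = (α_0, …, α_q) be integers. If the congruence x_{k+q+1} ≡ Σ_{j=0}^{q} α_j · x_{k+j} (mod p) holds for every k ∈ {0, 1, …, q̃−1}, then it holds for every k ∈ ℕ. (Reduction of the defining system of equations to its upper block in the proof of Theorem 4.) -/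
/-- Let `q ≥ q̃ = (p-1)/2` and let `α = (α_0, …, α_q)` be integers. If the
congruence `x (k+q+1) ≡ ∑_{j=0}^{q} α_j * x (k+j) (mod p)` holds for every
`k ∈ {0, …, q̃-1}`, then it holds for every `k ∈ ℕ`. -/
theorem dh_recurrence_reduction_to_upper_block
    (p : ℕ) (hp : p.Prime) (hodd : Odd p) (hp3 : 3 < p)
    (m : ℤ) (hm1 : 1 < m) (hmp : m < (p : ℤ))
    (hgen : ∀ c : ZMod p, c ≠ 0 → ∃ k : ℕ, (m : ZMod p) ^ k = c)
    (x : ℕ → ℤ) (hx : ∀ k, x k = m ^ k % (p : ℤ))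
    (q : ℕ) (hq : (p - 1) / 2 ≤ q) (α : Fin (q + 1) → ℤ)
    (hblock : ∀ k : ℕ, k < (p - 1) / 2 →
      x (k + q + 1) ≡ ∑ j : Fin (q + 1), α j * x (k + j) [ZMOD (p : ℤ)]) :
    ∀ k : ℕ, x (k + q + 1) ≡ ∑ j : Fin (q + 1), α j * x (k + j) [ZMOD (p : ℤ)] := by
  -- reformulate everything in ZMod p
  have hcast : ∀ k : ℕ, ((x k : ZMod p)) = (m : ZMod p) ^ k := by
    intro k
    rw [hx k]
    push_cast [ZMod.intCast_mod]
    ring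
  have hs : ∀ k : ℕ, (∑ j : Fin (q + 1), (α j : ZMod p) * (m : ZMod p) ^ (k + (j : ℕ)))
      = (m : ZMod p) ^ k * ∑ j : Fin (q + 1), (α j : ZMod p) * (m : ZMod p) ^ (j : ℕ) := by
    intro k
    rw [Finset.mul_sum]
    refine Finset.sum_congr rfl fun j _ => by rw [pow_add]; ring
  have key : ∀ k : ℕ,
      (x (k + q + 1) ≡ ∑ j : Fin (q + 1), α j * x (k + j) [ZMOD (p : ℤ)]) ↔
      ((m : ZMod p) ^ k * ((m : ZMod p) ^ (q + 1)
        - ∑ j : Fin (q + 1), (α j : ZMod p) * (m : ZMod p) ^ (j : ℕ)) = 0) := by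
    intro k
    rw [← ZMod.intCast_eq_intCast_iff]
    push_cast
    simp only [hcast]
    rw [hs, show k + q + 1 = k + (q + 1) from rfl, pow_add, mul_sub, sub_eq_zero]
  have h0 : 0 < (p - 1) / 2 := by omega
  have hb := (key 0).mp (hblock 0 h0)
  simp only [pow_zero, one_mul] at hb
  intro k
  rw [key k, hb, mul_zero]
end

section
/- Let q ≥ q̃ = (p−1)/2 and N ≥ 1, and let Z be the (q+1)×N real matrix with entries Z_{j,k} = x_{k+j} for j ∈ {0,…,q} and k ∈ {0,…,N−1} (the columns are the lifted data states z_k = (x_k, …, x_{k+q})). Then rank(Z) ≤ q̃ + 1. -/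
/-- Let `q ≥ q̃ = (p-1)/2` and `N ≥ 1`, and let `Z` be the `(q+1) × N`
real matrix with entries `Z j k = x (k + j)` (its columns are the lifted data states
`z_k = (x_k, …, x_{k+q})`). Then `rank Z ≤ q̃ + 1`. -/
theorem dh_data_matrix_rank_le
    (p : ℕ) (hp : p.Prime) (hodd : Odd p) (hp3 : 3 < p)
    (m : ℤ) (hm1 : 1 < m) (hmp : m < (p : ℤ))
    (hgen : ∀ c : ZMod p, c ≠ 0 → ∃ k : ℕ, (m : ZMod p) ^ k = c)
    (x : ℕ → ℤ) (hx : ∀ k, x k = m ^ k % (p : ℤ))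
    (q : ℕ) (hq : (p - 1) / 2 ≤ q) (N : ℕ) (hN : 1 ≤ N)
    (Z : Matrix (Fin (q + 1)) (Fin N) ℝ)
    (hZ : ∀ (j : Fin (q + 1)) (k : Fin N), Z j k = (x ((k : ℕ) + (j : ℕ)) : ℝ)) :
    Z.rank ≤ (p - 1) / 2 + 1 := by
  classical
  have hp2 : 2 ≤ p := hp.two_le
  obtain ⟨c, hc⟩ := hodd
  set t : ℕ := (p - 1) / 2 with ht
  have htt : t + t = p - 1 := by omega
  have ht1 : 1 ≤ t := by omega
  haveI : Fact p.Prime := ⟨hp⟩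
  -- m is nonzero mod p
  have hm0 : ((m : ℤ) : ZMod p) ≠ 0 := by
    rw [Ne, ZMod.intCast_zmod_eq_zero_iff_dvd]
    intro hdvd
    have := Int.le_of_dvd (by omega) hdvd
    omega
  -- m has full order p - 1
  set u : (ZMod p)ˣ := Units.mk0 _ hm0 with hu
  have hall : ∀ v : (ZMod p)ˣ, v ∈ Subgroup.zpowers u := by
    intro v
    obtain ⟨k, hk⟩ := hgen v v.ne_zero
    have hk' : u ^ k = v := by
      ext
      rw [Units.val_pow_eq_pow_val]
      simpa [hu] using hk
    exact hk' ▸ Subgroup.pow_mem _ (Subgroup.mem_zpowers u) k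
  have hord : orderOf u = p - 1 := by
    rw [orderOf_eq_card_of_forall_mem_zpowers hall, Nat.card_eq_fintype_card,
      ZMod.card_units]
  have hupow : u ^ t ≠ 1 := pow_ne_one_of_lt_orderOf (by omega) (by omega)
  have hsq : (u ^ t) * (u ^ t) = 1 := by
    rw [← pow_add, htt, ← hord, pow_orderOf_eq_one]
  -- m ^ t = -1 in ZMod p
  have hneg : ((m : ℤ) : ZMod p) ^ t = -1 := by
    have hval : ((m : ℤ) : ZMod p) ^ t * ((m : ℤ) : ZMod p) ^ t = 1 := by
      have := congrArg (Units.val) hsq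
      simpa [hu, Units.val_pow_eq_pow_val] using this
    have hfac : (((m : ℤ) : ZMod p) ^ t - 1) * (((m : ℤ) : ZMod p) ^ t + 1) = 0 := by
      ring_nf
      rw [mul_comm] at hval
      linear_combination hval
    rcases mul_eq_zero.mp hfac with h | h
    · exfalso
      apply hupow
      ext
      rw [Units.val_pow_eq_pow_val]
      simp only [hu, Units.val_mk0, Units.val_one]
      exact sub_eq_zero.mp h
    · exact eq_neg_of_add_eq_zero_left h
  -- basic bounds on x
  have hx0 : ∀ a : ℕ, 0 < x a ∧ x a < (p : ℤ) := by
    intro a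
    rw [hx]
    refine ⟨?_, Int.emod_lt_of_pos _ (by exact_mod_cast hp.pos)⟩
    rcases (Int.emod_nonneg (m ^ a) (by positivity : ((p : ℤ)) ≠ 0)).lt_or_eq with h | h
    · exact h
    · exfalso
      have hdvd : ((p : ℤ)) ∣ m ^ a := Int.dvd_of_emod_eq_zero h.symm
      have : ((m ^ a : ℤ) : ZMod p) = 0 := (ZMod.intCast_zmod_eq_zero_iff_dvd _ _).mpr hdvd
      rw [Int.cast_pow] at this
      exact pow_ne_zero a hm0 this
  -- key relation: x (a + t) = p - x a
  have key : ∀ a : ℕ, x (a + t) = (p : ℤ) - x a := by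
    intro a
    obtain ⟨hxa1, hxa2⟩ := hx0 a
    have hcast : ((m ^ (a + t) : ℤ) : ZMod p) = (((p : ℤ) - x a : ℤ) : ZMod p) := by
      rw [hx a]
      push_cast
      rw [pow_add, hneg, ZMod.natCast_self]
      ring
    have hmod := (ZMod.intCast_eq_intCast_iff _ _ _).mp hcast
    have h1 : ((p : ℤ) - x a) % (p : ℤ) = (p : ℤ) - x a :=
      Int.emod_eq_of_lt (by omega) (by omega)
    rw [hx]
    calc m ^ (a + t) % (p : ℤ) = ((p : ℤ) - x a) % (p : ℤ) := hmod
    _ = (p : ℤ) - x a := h1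
  -- periodicity with period t + t
  have per : ∀ a : ℕ, x (a + (t + t)) = x a := by
    intro a
    have h1 : a + (t + t) = (a + t) + t := by ring
    rw [h1, key, key]
    ring
  have pert : ∀ (s a : ℕ), x (a + (t + t) * s) = x a := by
    intro s
    induction s with
    | zero => simp
    | succ n ih =>
      intro a
      have h1 : a + (t + t) * (n + 1) = (a + (t + t) * n) + (t + t) := by ring
      rw [h1, per, ih]
  set P : ℕ := t + t with hPdef
  -- the factorization
  let B : Matrix (Fin (q + 1)) (Fin (t + 1)) ℝ := fun j i =>
    if (j : ℕ) % P < t then (if (i : ℕ) = (j : ℕ) % P then 1 else 0)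
    else (if (i : ℕ) = t then (p : ℝ) else if (i : ℕ) = (j : ℕ) % P - t then -1 else 0)
  let C : Matrix (Fin (t + 1)) (Fin N) ℝ := fun i k =>
    if (i : ℕ) = t then 1 else ((x ((k : ℕ) + (i : ℕ)) : ℤ) : ℝ)
  have hfact : Z = B * C := by
    ext j k
    rw [Matrix.mul_apply, hZ]
    have hPpos : 0 < P := by omega
    have hr : (j : ℕ) % P < P := Nat.mod_lt _ hPpos
    have hxj : x ((k : ℕ) + (j : ℕ)) = x ((k : ℕ) + (j : ℕ) % P) := by
      have hmd := Nat.mod_add_div (j : ℕ) P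
      have hjr : (k : ℕ) + (j : ℕ) = ((k : ℕ) + (j : ℕ) % P) + P * ((j : ℕ) / P) := by omega
      rw [hjr]
      exact pert _ _
    by_cases hcase : (j : ℕ) % P < t
    · -- single entry
      set i₀ : Fin (t + 1) := ⟨(j : ℕ) % P, by omega⟩ with hi₀
      have hterm : ∀ i : Fin (t + 1), B j i * C i k = if i = i₀ then C i₀ k else 0 := by
        intro i
        by_cases h : i = i₀
        · subst h
          simp [B, hcase, hi₀]
        · have hv : (i : ℕ) ≠ (j : ℕ) % P := by
            intro hh
            exact h (Fin.ext (by simpa [hi₀] using hh))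
          simp [B, hcase, hv, h]
      rw [Finset.sum_congr rfl (fun i _ => hterm i), Finset.sum_ite_eq']
      simp only [Finset.mem_univ, if_true]
      have hC : C i₀ k = ((x ((k : ℕ) + (j : ℕ) % P) : ℤ) : ℝ) := by
        have : (i₀ : ℕ) ≠ t := by simp [hi₀]; omega
        simp [C, this, hi₀]
        intro h; omega
      rw [hC, hxj]
    · -- two entries
      push_neg at hcase
      have hrt : (j : ℕ) % P - t < t := by omega
      set i₁ : Fin (t + 1) := ⟨t, by omega⟩ with hi₁
      set i₂ : Fin (t + 1) := ⟨(j : ℕ) % P - t, by omega⟩ with hi₂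
      have h12 : i₁ ≠ i₂ := by
        intro h
        have := congrArg Fin.val h
        simp [hi₁, hi₂] at this
        omega
      have hterm : ∀ i : Fin (t + 1), B j i * C i k =
          (if i = i₁ then (p : ℝ) * C i k else 0) + (if i = i₂ then (-1) * C i k else 0) := by
        intro i
        by_cases h1 : i = i₁
        · subst h1
          simp [B, not_lt.mpr hcase, hi₁, Ne.symm h12, h12]
          intro h; exact absurd h h12
        · by_cases h2 : i = i₂
          · subst h2
            have hv : (i₂ : ℕ) ≠ t := by simp [hi₂]; omega
            simp [B, not_lt.mpr hcase, hv, hi₂, h1, Fin.ext_iff, hi₁]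
            split_ifs with h
            · omega
            · simp
          · have hv1 : (i : ℕ) ≠ t := by
              intro hh; exact h1 (Fin.ext (by simpa [hi₁] using hh))
            have hv2 : (i : ℕ) ≠ (j : ℕ) % P - t := by
              intro hh; exact h2 (Fin.ext (by simpa [hi₂] using hh))
            simp [B, not_lt.mpr hcase, hv1, hv2, h1, h2]
      rw [Finset.sum_congr rfl (fun i _ => hterm i), Finset.sum_add_distrib,
        Finset.sum_ite_eq', Finset.sum_ite_eq']
      simp only [Finset.mem_univ, if_true]
      have hC1 : C i₁ k = 1 := by simp [C, hi₁]
      have hC2 : C i₂ k = ((x ((k : ℕ) + ((j : ℕ) % P - t)) : ℤ) : ℝ) := by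
        have : (i₂ : ℕ) ≠ t := by simp [hi₂]; omega
        simp [C, this, hi₂]
        intro h; omega
      rw [hC1, hC2, hxj]
      have hkey : x ((k : ℕ) + (j : ℕ) % P) = (p : ℤ) - x ((k : ℕ) + ((j : ℕ) % P - t)) := by
        have h := key ((k : ℕ) + ((j : ℕ) % P - t))
        have heq : (k : ℕ) + ((j : ℕ) % P - t) + t = (k : ℕ) + (j : ℕ) % P := by omega
        rw [heq] at h
        exact h
      rw [hkey]
      push_cast
      ring
  rw [hfact]
  calc (B * C).rank ≤ B.rank := Matrix.rank_mul_le_left B C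
  _ ≤ Fintype.card (Fin (t + 1)) := Matrix.rank_le_card_width B
  _ = t + 1 := by simp
end
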